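/- arXiv:math/0605115 — 5 statements merged into one kernel-verified Lean document; each statement's English description precedes it below -/
import Mathlib

section
/- Let A be a commutative ring and J an ideal contained in the Jacobson radical of A. If the localization J_p = J·A_p is zero for every prime ideal p of A containing J, then J = 0. -/
/-- Let `A` be a commutative ring and `J` an ideal contained in the Jacobson radical of `A`.
If the localization of `J` at every prime ideal containing `J` is zero, then `J = ⊥`. -/
theorem ideal_eq_bot_of_localization_at_primes_over (A : Type*) [CommRing A] (J : Ideal A)
    (hJ : J ≤ (⊥ : Ideal A).jacobson)
    (h : ∀ p : PrimeSpectrum A, J ≤ p.asIdeal →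
      J.map (algebraMap A (Localization.AtPrime p.asIdeal)) = ⊥) :
    J = ⊥ := by
  apply ideal_eq_bot_of_localization'
  intro m hm
  exact h ⟨m, hm.isPrime⟩ (hJ.trans (sInf_le ⟨bot_le, hm⟩))
end

section
/- Let B be a commutative noetherian ring, K ⊆ B an ideal, and A a commutative noetherian B-algebra such that the extended ideal K·A is contained in the Jacobson radical of A. Then A is flat as a B-module if and only if A/K^{n+1}A is flat as a B/K^{n+1}-module for every natural number n. -/
/-!
Let `M` be a finite `A`-module (e.g. `A`), `I` an ideal of `B` and `x ∈ M ⊗[B] I` an element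
dying in `M`. Flatness of `M/QM` over `B/Q` puts `x` in the image of `M ⊗ (I ∩ Q)` plus
`Q (M ⊗ I)`. For `Q = K ^ (n + 1)` with `n` large, Artin–Rees gives
`I ∩ Q ⊆ K ^ i I`, so `x ∈ K ^ i (M ⊗ I)` for every `i`. Since `M ⊗ I` is a finite `A`-module
and `KA` lies in the Jacobson radical of `A`, Krull's intersection theorem forces `x = 0`.
The converse is flat base change along `B → B/Q`.
-/

open TensorProduct LinearMap

section SurjectiveAlgebraMap

variable {R S M N P : Type*} [CommRing R] [CommRing S] [Algebra R S]
  [AddCommGroup M] [Module R M] [Module S M] [IsScalarTower R S M]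
  [AddCommGroup N] [Module R N] [Module S N] [IsScalarTower R S N]
  [AddCommGroup P] [Module R P] [Module S P] [IsScalarTower R S P]

theorem Module.Flat.lTensor_injective_of_surjective_algebraMap [Module.Flat S M]
    (hS : Function.Surjective (algebraMap R S)) {f : N →ₗ[R] P} (hf : Function.Injective f) :
    Function.Injective (lTensor M f) := by
  have := CompatibleSMul.of_algebraMap_surjective M N hS
  have := CompatibleSMul.of_algebraMap_surjective M P hS
  let eN := equivOfCompatibleSMul R S R M N
  let eP := equivOfCompatibleSMul R S R M P
  let f' := f.extendScalarsOfSurjective hS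
  have hcomm : ∀ x, lTensor M f (eN x) = eP (lTensor M f' x) := fun x => by
    induction x using TensorProduct.induction_on with
    | zero => simp
    | tmul m n => rfl
    | add x y hx hy => simp only [map_add, hx, hy]
  have : ⇑(lTensor M f) = eP ∘ lTensor M f' ∘ eN.symm :=
    funext fun x => by simpa using hcomm (eN.symm x)
  rw [this]
  exact eP.injective.comp
    ((Module.Flat.lTensor_preserves_injective_linearMap f' hf).comp eN.symm.injective)

end SurjectiveAlgebraMap

section SmulTop

variable {R M N : Type*} [CommRing R] [AddCommGroup M] [Module R M] [AddCommGroup N] [Module R N]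
  (J : Ideal R)

theorem LinearMap.range_rTensor_subtype_smul_top_le :
    range (rTensor N (J • ⊤ : Submodule R M).subtype) ≤ J • ⊤ := by
  rintro _ ⟨y, rfl⟩
  induction y using TensorProduct.induction_on with
  | zero => simp
  | tmul m n =>
    exact Submodule.smul_top_le_comap_smul_top J ((TensorProduct.mk R M N).flip n) m.2
  | add y z hy hz => rw [map_add]; exact add_mem hy hz

theorem LinearMap.range_lTensor_subtype_le_smul_top {N' : Submodule R N} (h : N' ≤ J • ⊤) :
    range (lTensor M N'.subtype) ≤ J • ⊤ := by
  rintro _ ⟨y, rfl⟩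
  induction y using TensorProduct.induction_on with
  | zero => simp
  | tmul m n => exact Submodule.smul_top_le_comap_smul_top J (TensorProduct.mk R M N m) (h n.2)
  | add y z hy hz => rw [map_add]; exact add_mem hy hz

theorem Submodule.smul_top_le_restrictScalars_map_smul_top {A : Type*} [CommRing A] [Algebra R A]
    [Module A M] [IsScalarTower R A M] :
    (J • ⊤ : Submodule R M) ≤
      ((J.map (algebraMap R A)) • ⊤ : Submodule A M).restrictScalars R := by
  refine Submodule.smul_le.mpr fun r hr m _ => ?_
  rw [Submodule.restrictScalars_mem, ← algebraMap_smul A r m]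
  exact Submodule.smul_mem_smul (Ideal.mem_map_of_mem _ hr) trivial

end SmulTop

section Quotient

variable {B M : Type*} [CommRing B] [AddCommGroup M] [Module B M]

theorem Module.Flat.quotient_smul_top [Module.Flat B M] (Q : Ideal B) :
    Module.Flat (B ⧸ Q) (M ⧸ (Q • ⊤ : Submodule B M)) :=
  .of_linearEquiv ((quotTensorEquivQuotSMul M Q).extendScalarsOfSurjective
    Ideal.Quotient.mk_surjective).symm

theorem ker_lTensor_subtype_le_of_flat_quotient (Q I : Ideal B)
    [Module.Flat (B ⧸ Q) (M ⧸ (Q • ⊤ : Submodule B M))] :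
    ker (lTensor M I.subtype) ≤
      range (lTensor M (Submodule.comap I.subtype Q).subtype) ⊔ Q • ⊤ := by
  let J : Submodule B (B ⧸ Q) := (I.map (Ideal.Quotient.mk Q)).restrictScalars B
  let g : I →ₗ[B] J := ((Ideal.Quotient.mkₐ B Q).toLinearMap ∘ₗ I.subtype).codRestrict J
    fun i => Ideal.mem_map_of_mem _ i.2
  have hgJ : J.subtype ∘ₗ g = (Ideal.Quotient.mkₐ B Q).toLinearMap ∘ₗ I.subtype := rfl
  have hg : Function.Surjective g := by
    rintro ⟨_, hy⟩
    obtain ⟨i, hi, rfl⟩ :=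
      (Ideal.mem_map_iff_of_surjective _ Ideal.Quotient.mk_surjective).mp hy
    exact ⟨⟨i, hi⟩, rfl⟩
  have hker : ker g = Submodule.comap I.subtype Q := by
    ext i
    rw [mem_ker, Submodule.mem_comap, ← Submodule.coe_eq_zero]
    exact Ideal.Quotient.eq_zero_iff_mem
  have hJ : Function.Injective (lTensor (M ⧸ (Q • ⊤ : Submodule B M)) J.subtype) :=
    Module.Flat.lTensor_injective_of_surjective_algebraMap
      (Ideal.Quotient.mk_surjective (I := Q)) J.injective_subtype
  intro x hx
  have hx' : map (Q • ⊤ : Submodule B M).mkQ g x = 0 := hJ <| by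
    rw [map_zero, ← comp_apply, lTensor_comp_map, hgJ, ← map_comp_lTensor, comp_apply,
      mem_ker.mp hx, map_zero]
  rw [← mem_ker, TensorProduct.map_ker (exact_subtype_mkQ _) (Submodule.mkQ_surjective _)
    (exact_subtype_ker_map g) hg, hker] at hx'
  exact sup_le_sup_left (range_rTensor_subtype_smul_top_le Q) _ hx'

theorem Ideal.exists_comap_subtype_pow_le_pow_smul_top [IsNoetherianRing B] (K I : Ideal B)
    (i : ℕ) : ∃ n, Submodule.comap I.subtype (K ^ n) ≤ (K ^ i • ⊤ : Submodule B I) := by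
  obtain ⟨k, hk⟩ := Ideal.exists_pow_inf_eq_pow_smul K (I : Submodule B B)
  refine ⟨i + k, fun c hc => ?_⟩
  have hc' : (c : B) ∈ (K ^ (i + k) • ⊤ ⊓ I : Submodule B B) := by
    rw [smul_eq_mul, Ideal.mul_top]
    exact ⟨hc, c.2⟩
  rw [hk _ (Nat.le_add_left k i), Nat.add_sub_cancel] at hc'
  exact (Submodule.mem_smul_top_iff _ _ c).mpr (Submodule.smul_mono le_rfl inf_le_right hc')

theorem mem_pow_smul_top_of_mem_ker_lTensor [IsNoetherianRing B] (K I : Ideal B)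
    (hflat : ∀ n : ℕ, Module.Flat (B ⧸ K ^ (n + 1)) (M ⧸ (K ^ (n + 1) • ⊤ : Submodule B M)))
    {x : M ⊗[B] I} (hx : x ∈ ker (lTensor M I.subtype)) (i : ℕ) :
    x ∈ (K ^ i • ⊤ : Submodule B (M ⊗[B] I)) := by
  obtain ⟨n, hn⟩ := Ideal.exists_comap_subtype_pow_le_pow_smul_top K I i
  have hQ : Submodule.comap I.subtype (K ^ (n + i + 1)) ≤ (K ^ i • ⊤ : Submodule B I) :=
    (Submodule.comap_mono (Ideal.pow_le_pow_right (by omega))).trans hn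
  have := hflat (n + i)
  exact sup_le (range_lTensor_subtype_le_smul_top _ hQ)
    (Submodule.smul_mono_left (Ideal.pow_le_pow_right (by omega : i ≤ n + i + 1)))
    (ker_lTensor_subtype_le_of_flat_quotient _ I hx)

end Quotient

section Tower

variable {B A M : Type*} [CommRing B] [CommRing A] [Algebra B A]
  [AddCommGroup M] [Module A M] [Module B M] [IsScalarTower B A M]

theorem eq_zero_of_forall_mem_pow_smul_top [IsNoetherianRing A] [Module.Finite A M]
    {K : Ideal B} (hK : K.map (algebraMap B A) ≤ (⊥ : Ideal A).jacobson) {x : M}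
    (hx : ∀ i : ℕ, x ∈ (K ^ i • ⊤ : Submodule B M)) : x = 0 := by
  have hx' : x ∈ (⨅ i : ℕ, K.map (algebraMap B A) ^ i • ⊤ : Submodule A M) :=
    Submodule.mem_iInf _ |>.mpr fun i => by
      rw [← Ideal.map_pow]
      exact Submodule.smul_top_le_restrictScalars_map_smul_top (A := A) (K ^ i) (hx i)
  rwa [Ideal.iInf_pow_smul_eq_bot_of_le_jacobson _ hK, Submodule.mem_bot] at hx'

theorem Module.flat_iff_forall_flat_quotient_pow_smul_top [IsNoetherianRing B]
    [IsNoetherianRing A] [Module.Finite A M] (K : Ideal B)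
    (hK : K.map (algebraMap B A) ≤ (⊥ : Ideal A).jacobson) :
    Module.Flat B M ↔
      ∀ n : ℕ, Module.Flat (B ⧸ K ^ (n + 1)) (M ⧸ (K ^ (n + 1) • ⊤ : Submodule B M)) := by
  refine ⟨fun _ n => .quotient_smul_top _, fun h => ?_⟩
  refine Module.Flat.iff_lTensor_injective'.mpr fun I => ?_
  have : Module.Finite A (M ⊗[B] I) := .equiv (AlgebraTensorModule.cancelBaseChange B A A M I)
  rw [← ker_eq_bot, eq_bot_iff]
  exact fun x hx => (Submodule.mem_bot _).mpr <|
    eq_zero_of_forall_mem_pow_smul_top hK (mem_pow_smul_top_of_mem_ker_lTensor K I h hx)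

end Tower

theorem flat_quotient_map_iff_flat_quotient_smul_top {B A : Type*} [CommRing B] [CommRing A]
    [Algebra B A] (Q : Ideal B) :
    (letI : Algebra (B ⧸ Q) (A ⧸ Q.map (algebraMap B A)) :=
      (Ideal.quotientMap (Q.map (algebraMap B A)) (algebraMap B A) Ideal.le_comap_map).toAlgebra;
      Module.Flat (B ⧸ Q) (A ⧸ Q.map (algebraMap B A))) ↔
      Module.Flat (B ⧸ Q) (A ⧸ (Q • ⊤ : Submodule B A)) := by
  -- Mathlib's instance has a different `smul` field, so it agrees with this one only up to `ext`.
  rw [show (Ideal.quotientMap (Q.map (algebraMap B A)) (algebraMap B A)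
      Ideal.le_comap_map).toAlgebra = Ideal.Quotient.algebraQuotientMapQuotient from
    Algebra.algebra_ext _ _ fun _ => rfl]
  exact Module.Flat.equiv_iff (((Submodule.quotEquivOfEq _ _ (Ideal.smul_top_eq_map Q)).trans
    (Submodule.Quotient.restrictScalarsEquiv B _)).extendScalarsOfSurjective
    Ideal.Quotient.mk_surjective).symm

/-- Local flatness criterion: let `B` be a commutative noetherian ring, `K ⊆ B` an ideal, and
`A` a commutative noetherian `B`-algebra such that `K·A` is contained in the Jacobson radical
of `A`.  Then `A` is flat over `B` if and only if `A/K^(n+1)A` is flat over `B/K^(n+1)` for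
every `n : ℕ`. -/
theorem flat_iff_flat_quotients (B A : Type*) [CommRing B] [CommRing A] [Algebra B A]
    [IsNoetherianRing B] [IsNoetherianRing A] (K : Ideal B)
    (hK : K.map (algebraMap B A) ≤ (⊥ : Ideal A).jacobson) :
    Module.Flat B A ↔ ∀ n : ℕ,
      letI : Algebra (B ⧸ K ^ (n + 1)) (A ⧸ (K ^ (n + 1)).map (algebraMap B A)) :=
        (Ideal.quotientMap ((K ^ (n + 1)).map (algebraMap B A)) (algebraMap B A)
          Ideal.le_comap_map).toAlgebra
      Module.Flat (B ⧸ K ^ (n + 1)) (A ⧸ (K ^ (n + 1)).map (algebraMap B A)) :=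
  (Module.flat_iff_forall_flat_quotient_pow_smul_top K hK).trans
    (forall_congr' fun _ => (flat_quotient_map_iff_flat_quotient_smul_top _).symm)
end

section
/- Let A be a commutative ring and I a finitely generated ideal of A. Then the canonical ring homomorphism A[[X]] ⊗_A (A/I) → (A/I)[[X]] is an isomorphism; equivalently, A[[X]]/(I·A[[X]]) ≅ (A/I)[[X]]. -/
/-- The canonical `A`-algebra homomorphism `A[[X]] → (A/I)[[X]]` induced by reduction of
coefficients. -/
noncomputable def powerSeriesQuotMap (A : Type*) [CommRing A] (I : Ideal A) :
    PowerSeries A →ₐ[A] PowerSeries (A ⧸ I) where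
  toRingHom := PowerSeries.map (Ideal.Quotient.mk I)
  commutes' := fun a => by
    simp [PowerSeries.algebraMap_apply]

/-!
Every element of `A[[X]] ⊗_A A/I` is some `f ⊗ 1`, which is `0` exactly when `f ∈ I·A[[X]]`, and
it maps to the reduction of `f`. So the point is that a series with all coefficients in `I` lies
in `I·A[[X]]`: if `I = (s₁, …, sₖ)` and `aₙ = ∑ᵢ cₙᵢ sᵢ`, then `f = ∑ᵢ sᵢ · ∑ₙ cₙᵢ Xⁿ`, a finite
sum only because `I` is finitely generated.
-/

theorem Algebra.TensorProduct.tmul_one_eq_zero_iff {A B : Type*} [CommRing A] [CommRing B]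
    [Algebra A B] {I : Ideal A} {b : B} :
    b ⊗ₜ[A] (1 : A ⧸ I) = 0 ↔ b ∈ I.map (algebraMap A B) := by
  rw [← quotIdealMapEquivTensorQuot_mk, map_eq_zero_iff _ (AlgEquiv.injective _),
    Ideal.Quotient.eq_zero_iff_mem]

namespace PowerSeries

variable {R : Type*} [CommRing R] {I : Ideal R}

theorem mem_map_C_of_coeff_mem (hI : I.FG) {f : R⟦X⟧} (hf : ∀ n, coeff n f ∈ I) :
    f ∈ I.map C := by
  obtain ⟨S, rfl⟩ := hI
  choose c hc using fun n => Submodule.mem_span_finset.1 (hf n)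
  have hsum : f = ∑ s ∈ S, mk (fun n => c n s) * C s := by
    ext n
    rw [map_sum, ← (hc n).2]
    exact Finset.sum_congr rfl fun s _ => by rw [coeff_mul_C, coeff_mk, smul_eq_mul]
  rw [hsum]
  exact Ideal.sum_mem _ fun s hs =>
    Ideal.mul_mem_left _ _ (Ideal.mem_map_of_mem _ (Ideal.subset_span hs))

theorem ker_map_quotient_mk (hI : I.FG) :
    RingHom.ker (map (Ideal.Quotient.mk I)) = I.map C := by
  refine le_antisymm (fun f hf => mem_map_C_of_coeff_mem hI fun n => ?_) ?_
  · rw [← Ideal.Quotient.eq_zero_iff_mem, ← coeff_map, RingHom.mem_ker.1 hf, map_zero]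
  · rw [Ideal.map_le_iff_le_comap]
    intro a ha
    rw [Ideal.mem_comap, RingHom.mem_ker, map_C, Ideal.Quotient.eq_zero_iff_mem.2 ha, map_zero]

end PowerSeries

/-- Let `A` be a commutative ring and `I` a finitely generated ideal.  Then the canonical
ring homomorphism `A[[X]] ⊗_A (A/I) → (A/I)[[X]]` is an isomorphism; equivalently,
`A[[X]]/(I·A[[X]]) ≅ (A/I)[[X]]`. -/
theorem powerSeries_tensor_quotient_bijective (A : Type*) [CommRing A] (I : Ideal A)
    (hI : I.FG) :
    Function.Bijective
      (Algebra.TensorProduct.lift (powerSeriesQuotMap A I)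
        (IsScalarTower.toAlgHom A (A ⧸ I) (PowerSeries (A ⧸ I)))
        (fun x y => Commute.all _ _)) := by
  set φ := Algebra.TensorProduct.lift (powerSeriesQuotMap A I)
    (IsScalarTower.toAlgHom A (A ⧸ I) (PowerSeries (A ⧸ I))) (fun _ _ => Commute.all _ _)
  have hφ (f : PowerSeries A) : φ (f ⊗ₜ 1) = PowerSeries.map (Ideal.Quotient.mk I) f := by
    simp [φ, powerSeriesQuotMap]
  refine ⟨(injective_iff_map_eq_zero φ).2 fun t ht => ?_, fun g => ?_⟩
  · obtain ⟨f, rfl⟩ := Algebra.TensorProduct.includeLeft_surjective (R := A) A (PowerSeries A)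
      Ideal.Quotient.mk_surjective t
    rw [Algebra.TensorProduct.includeLeft_apply, hφ, ← RingHom.mem_ker,
      PowerSeries.ker_map_quotient_mk hI] at ht
    exact Algebra.TensorProduct.tmul_one_eq_zero_iff.2 ht
  · obtain ⟨f, rfl⟩ := PowerSeries.map_surjective _ Ideal.Quotient.mk_surjective g
    exact ⟨f ⊗ₜ 1, hφ f⟩
end

section
/- Let k be a field and C a local commutative k-algebra that is essentially of finite type over k and formally unramified over k (equivalently, the module of Kähler differentials Ω_{C/k} vanishes). Then C is a field and is a finite separable extension of k. -/
universe u

open IsLocalRing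

/-- An unramified local algebra satisfies `m_K A = m_A`, and `m_K = 0` for a field `K`. -/
theorem Algebra.FormallyUnramified.isField_of_isLocalRing (K A : Type*) [Field K] [CommRing A]
    [IsLocalRing A] [Algebra K A] [Algebra.EssFiniteType K A] [Algebra.FormallyUnramified K A] :
    IsField A := by
  rw [isField_iff_maximalIdeal_eq, ← Algebra.FormallyUnramified.map_maximalIdeal (R := K),
    maximalIdeal_eq_bot, Ideal.map_bot]

/-- Let `k` be a field and `C` a local commutative `k`-algebra, essentially of finite type
and formally unramified over `k`.  Then `C` is a field and is a finite separable extension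
of `k`. -/
theorem formallyUnramified_local_essFiniteType_is_finite_separable (k C : Type u) [Field k]
    [CommRing C] [IsLocalRing C] [Algebra k C] [Algebra.EssFiniteType k C]
    [Algebra.FormallyUnramified k C] :
    IsField C ∧ Module.Finite k C ∧ Algebra.IsSeparable k C := by
  have hC : IsField C := Algebra.FormallyUnramified.isField_of_isLocalRing k C
  let : Field C := hC.toField
  exact ⟨hC, Algebra.FormallyUnramified.finite_of_free k C,
    Algebra.FormallyUnramified.isSeparable k C⟩
end

section
/- Let B be a commutative noetherian ring that is complete and separated for the K-adic topology of an ideal K ⊆ B, let A be a commutative noetherian ring complete and separated for the J-adic topology of an ideal J ⊆ A, and let φ: B → A be a ring homomorphism with φ(K) ⊆ J such that for every n ≥ 0 the induced map B/K^{n+1} → A/J^{n+1} is surjective and such that A is flat as a B-module. Set I = ker(B → A/J). Then the canonical homomorphism from the I-adic completion of B to A is an isomorphism. -/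
/-!
Since `B → A/J` is surjective, `J = IA + J²`, hence `J = IA` by Nakayama: `J` lies in the
Jacobson radical of the `J`-adically complete ring `A`.

Flatness upgrades this to `φ⁻¹(IⁿA) = Iⁿ`. Put `Q = φ⁻¹(PA)` for an ideal `P`. A relation
`φ q = ∑ cᵢ φ pᵢ` with `pᵢ ∈ P` lifts to `q ⊗ 1 = ∑ pᵢ ⊗ cᵢ` in `Q ⊗ A`, because `Q ⊗ A → A` is
injective; pushing it along `A → A/J ≅ B/I` gives `q ≡ ∑ dᵢ pᵢ` modulo `IQ`, so `Q = P + IQ`.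
For `P = Iⁿ` this iterates to `Q ⊆ Iⁿ + IⁿQ = Iⁿ`.

Therefore `B/Iⁿ ≅ A/Jⁿ` compatibly in `n`, and in the limit the `I`-adic completion of `B` is
the `J`-adic completion of `A`, which is `A`.
-/

open TensorProduct

section Flat

variable {B A : Type*} [CommRing B] [CommRing A] [Algebra B A]

theorem Ideal.tmul_one_eq_sum_tmul_of_flat [Module.Flat B A] {Q : Ideal B} {n : ℕ}
    (x : Q) (y : Fin n → Q) (c : Fin n → A)
    (h : algebraMap B A x = ∑ i, c i * algebraMap B A (y i)) :
    x ⊗ₜ[B] (1 : A) = ∑ i, y i ⊗ₜ[B] c i := by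
  apply Module.Flat.rTensor_preserves_injective_linearMap (M := A) Q.subtype Subtype.val_injective
  apply (TensorProduct.lid B A).injective
  simp [Algebra.smul_def, h, mul_comm]

theorem Submodule.exists_sub_sum_mem_smul_top_of_tmul_one_eq_sum {M : Type*} [AddCommGroup M]
    [Module B M] {I : Ideal B} (f : A →ₐ[B] B ⧸ I) {n : ℕ} (x : M) (y : Fin n → M)
    (c : Fin n → A) (h : x ⊗ₜ[B] (1 : A) = ∑ i, y i ⊗ₜ[B] c i) :
    ∃ d : Fin n → B, x - ∑ i, d i • y i ∈ I • (⊤ : Submodule B M) := by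
  choose d hd using fun i ↦ Ideal.Quotient.mk_surjective (f (c i))
  refine ⟨d, ?_⟩
  have := congr(tensorQuotEquivQuotSMul M I (f.toLinearMap.lTensor M $h))
  simp only [map_sum, LinearMap.lTensor_tmul, AlgHom.toLinearMap_apply, map_one, ← hd] at this
  rw [← map_one (Ideal.Quotient.mk I)] at this
  simp only [tensorQuotEquivQuotSMul_tmul_mk, one_smul] at this
  rw [← Submodule.Quotient.mk_eq_zero, Submodule.Quotient.mk_sub, sub_eq_zero, this]
  exact (map_sum (I • ⊤ : Submodule B M).mkQ _ _).symm

theorem Ideal.comap_map_le_sup_mul_of_flat [Module.Flat B A] {I : Ideal B} (f : A →ₐ[B] B ⧸ I)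
    (P : Ideal B) :
    (P.map (algebraMap B A)).comap (algebraMap B A) ≤
      P ⊔ I * (P.map (algebraMap B A)).comap (algebraMap B A) := by
  set Q := (P.map (algebraMap B A)).comap (algebraMap B A)
  intro q hq
  obtain ⟨n, c, g, hg⟩ := Submodule.mem_span_set'.mp (Ideal.mem_comap.mp hq)
  choose p hpP hpg using fun i ↦ (g i).2
  have hpQ : ∀ i, p i ∈ Q := fun i ↦ Ideal.le_comap_map (hpP i)
  have htmul : (⟨q, hq⟩ : Q) ⊗ₜ[B] (1 : A) = ∑ i, (⟨p i, hpQ i⟩ : Q) ⊗ₜ[B] c i :=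
    Ideal.tmul_one_eq_sum_tmul_of_flat _ _ _ (by simp [← hg, hpg])
  obtain ⟨d, hd⟩ := Submodule.exists_sub_sum_mem_smul_top_of_tmul_one_eq_sum f _ _ _ htmul
  rw [Submodule.mem_smul_top_iff] at hd
  have hsum : ∑ i, d i * p i ∈ P := Ideal.sum_mem _ fun i _ ↦ P.mul_mem_left _ (hpP i)
  rw [← add_sub_cancel (∑ i, d i * p i) q]
  exact Ideal.add_mem _ (Ideal.mem_sup_left hsum) (Ideal.mem_sup_right (by simpa using hd))

end Flat

theorem Ideal.le_sup_pow_mul_of_le_sup_mul {R : Type*} [CommRing R] {P Q I : Ideal R}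
    (h : Q ≤ P ⊔ I * Q) (k : ℕ) : Q ≤ P ⊔ I ^ k * Q := by
  induction k with
  | zero => simp
  | succ k ih =>
    calc Q ≤ P ⊔ I ^ k * (P ⊔ I * Q) := ih.trans (sup_le_sup_left (Ideal.mul_mono_right h) _)
      _ ≤ P ⊔ I ^ (k + 1) * Q := by
        rw [Ideal.mul_sup, ← mul_assoc, ← pow_succ]
        exact sup_le le_sup_left (sup_le_sup_right Ideal.mul_le_right _)

theorem Ideal.comap_map_pow_eq_of_flat {B A : Type*} [CommRing B] [CommRing A] [Algebra B A]
    [Module.Flat B A] {I : Ideal B} (f : A →ₐ[B] B ⧸ I) (n : ℕ) :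
    ((I ^ n).map (algebraMap B A)).comap (algebraMap B A) = I ^ n := by
  refine le_antisymm ?_ Ideal.le_comap_map
  refine (Ideal.le_sup_pow_mul_of_le_sup_mul (Ideal.comap_map_le_sup_mul_of_flat f _) n).trans ?_
  exact sup_le le_rfl Ideal.mul_le_left

theorem Ideal.map_comap_eq_of_forall_exists_sub_mem_sq {B A : Type*} [CommRing B] [CommRing A]
    [IsNoetherianRing A] (φ : B →+* A) {J : Ideal A} (hJ : J ≤ (⊥ : Ideal A).jacobson)
    (hsurj : ∀ a, ∃ b, φ b - a ∈ J ^ 2) : (J.comap φ).map φ = J := by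
  refine le_antisymm Ideal.map_comap_le
    (Submodule.le_of_le_smul_of_le_jacobson_bot (IsNoetherian.noetherian J) hJ fun a ha ↦ ?_)
  obtain ⟨b, hb⟩ := hsurj a
  have hbJ : φ b ∈ J := by
    simpa using J.add_mem ha (Ideal.pow_le_self two_ne_zero hb)
  rw [← sub_sub_cancel (φ b) a, smul_eq_mul, ← pow_two]
  exact Submodule.sub_mem_sup (Ideal.mem_map_of_mem φ hbJ) hb

section Completion

variable {B A : Type*} [CommRing B] [CommRing A] {I : Ideal B} {J : Ideal A} {φ : B →+* A}

theorem AdicCompletion.factorPow_evalₐ {m n : ℕ} (hle : m ≤ n) (x : AdicCompletion I B) :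
    Ideal.Quotient.factorPow I hle (evalₐ I n x) = evalₐ I m x := by
  obtain ⟨s, rfl⟩ := AdicCompletion.mk_surjective I B x
  simpa using AdicCompletion.Ideal.mk_eq_mk I hle s

noncomputable def Ideal.quotientEquivOfComapEq (hcomap : J.comap φ = I)
    (hsurj : ∀ a, ∃ b, φ b - a ∈ J) : B ⧸ I ≃+* A ⧸ J :=
  RingEquiv.ofBijective (Ideal.quotientMap J φ hcomap.ge)
    ⟨Ideal.quotientMap_injective' hcomap.le, fun y ↦ by
      obtain ⟨a, rfl⟩ := Ideal.Quotient.mk_surjective y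
      obtain ⟨b, hb⟩ := hsurj a
      exact ⟨Ideal.Quotient.mk I b, Ideal.Quotient.eq.mpr hb⟩⟩

@[simp]
theorem Ideal.quotientEquivOfComapEq_mk (hcomap : J.comap φ = I)
    (hsurj : ∀ a, ∃ b, φ b - a ∈ J) (b : B) :
    Ideal.quotientEquivOfComapEq hcomap hsurj (Ideal.Quotient.mk I b) =
      Ideal.Quotient.mk J (φ b) :=
  rfl

theorem Ideal.factorPow_quotientEquivOfComapEq (hcomap : ∀ n, (J ^ n).comap φ = I ^ n)
    (hsurj : ∀ n a, ∃ b, φ b - a ∈ J ^ n) {m n : ℕ} (hle : m ≤ n) (y : B ⧸ I ^ n) :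
    Ideal.Quotient.factorPow J hle (Ideal.quotientEquivOfComapEq (hcomap n) (hsurj n) y) =
      Ideal.quotientEquivOfComapEq (hcomap m) (hsurj m) (Ideal.Quotient.factorPow I hle y) := by
  obtain ⟨b, rfl⟩ := Ideal.Quotient.mk_surjective y
  simp

theorem AdicCompletion.exists_ringEquiv_of_comap_pow_eq [IsAdicComplete J A]
    (hcomap : ∀ n, (J ^ n).comap φ = I ^ n) (hsurj : ∀ n a, ∃ b, φ b - a ∈ J ^ n) :
    ∃ ψ : AdicCompletion I B ≃+* A, ∀ b, ψ (algebraMap B (AdicCompletion I B) b) = φ b := by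
  let e n := Ideal.quotientEquivOfComapEq (hcomap n) (hsurj n)
  let F : AdicCompletion I B →+* A := IsAdicComplete.liftRingHom J
    (fun n ↦ (e n : B ⧸ I ^ n →+* A ⧸ J ^ n).comp (evalₐ I n)) fun hle ↦ by
      ext x; simp [e, Ideal.factorPow_quotientEquivOfComapEq hcomap hsurj, factorPow_evalₐ]
  let G : A →+* AdicCompletion I B := AdicCompletion.liftRingHom I
    (fun n ↦ ((e n).symm : A ⧸ J ^ n →+* B ⧸ I ^ n).comp (Ideal.Quotient.mk _)) fun hle ↦ by
      ext a
      simp only [RingHom.comp_apply, RingEquiv.coe_toRingHom]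
      rw [eq_comm, RingEquiv.symm_apply_eq, ← Ideal.factorPow_quotientEquivOfComapEq hcomap hsurj]
      simp [e]
  refine ⟨RingEquiv.ofRingHom F G ?_ ?_, fun b ↦ ?_⟩
  · ext a
    refine congrFun (IsHausdorff.funext' J (f := fun a ↦ F (G a)) (g := id) fun n a ↦ ?_) a
    simp [F, G, e]
  · refine RingHom.ext fun x ↦ ?_
    exact ext_evalₐ fun n ↦ by simp [F, G, e]
  · refine congrFun (IsHausdorff.funext' J (f := fun b ↦ F (algebraMap _ _ b)) (g := φ)
      fun n b ↦ ?_) b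
    simp [F, e]

end Completion

theorem adicCompletion_iso_of_flat_pseudoClosed_general (B A : Type*) [CommRing B] [CommRing A]
    [IsNoetherianRing A] (J : Ideal A) [IsAdicComplete J A] (φ : B →+* A)
    (hsurj : ∀ n : ℕ, ∀ a : A, ∃ b : B, φ b - a ∈ J ^ (n + 1))
    (hflat : letI := φ.toAlgebra; Module.Flat B A) :
    ∃ ψ : AdicCompletion (RingHom.ker ((Ideal.Quotient.mk J).comp φ)) B ≃+* A,
      ∀ b : B,
        ψ (algebraMap B (AdicCompletion (RingHom.ker ((Ideal.Quotient.mk J).comp φ)) B) b)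
          = φ b := by
  let := φ.toAlgebra
  set I := RingHom.ker ((Ideal.Quotient.mk J).comp φ)
  have hsurj' : ∀ n a, ∃ b, φ b - a ∈ J ^ n
    | 0, _ => ⟨0, by simp⟩
    | n + 1, a => hsurj n a
  have hmkφ : Function.Surjective ((Ideal.Quotient.mkₐ B J).comp (Algebra.ofId B A)) := fun y ↦ by
    obtain ⟨a, rfl⟩ := Ideal.Quotient.mk_surjective y
    obtain ⟨b, hb⟩ := hsurj' 1 a
    exact ⟨b, Ideal.Quotient.eq.mpr (pow_one J ▸ hb)⟩
  let f : A →ₐ[B] B ⧸ I :=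
    (Ideal.quotientKerAlgEquivOfSurjective hmkφ).symm.toAlgHom.comp (Ideal.Quotient.mkₐ B J)
  have hI : J.comap φ = I := by rw [← Ideal.mk_ker (I := J), RingHom.comap_ker]
  have hmap : I.map φ = J := hI ▸
    Ideal.map_comap_eq_of_forall_exists_sub_mem_sq φ (IsAdicComplete.le_jacobson_bot J) (hsurj 1)
  have hcomap : ∀ n, (J ^ n).comap φ = I ^ n := fun n ↦ by
    rw [← hmap, ← Ideal.map_pow]
    exact Ideal.comap_map_pow_eq_of_flat f n
  exact AdicCompletion.exists_ringEquiv_of_comap_pow_eq hcomap hsurj'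

/-- Let `B` be a noetherian ring, complete and separated for the `K`-adic topology, `A` a
noetherian ring complete and separated for the `J`-adic topology, and `φ : B → A` a ring
homomorphism with `φ(K) ⊆ J` such that every induced map `B/K^(n+1) → A/J^(n+1)` is
surjective (equivalently, every `a : A` is congruent to some `φ b` modulo `J^(n+1)`) and
such that `A` is flat as a `B`-module.  Set `I = ker(B → A/J)`.  Then the canonical
homomorphism from the `I`-adic completion of `B` to `A` is an isomorphism, i.e. there is a
ring isomorphism from the `I`-adic completion of `B` onto `A` compatible with `φ`. -/
theorem adicCompletion_iso_of_flat_pseudoClosed (B A : Type*) [CommRing B] [CommRing A]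
    [IsNoetherianRing B] [IsNoetherianRing A] (K : Ideal B) (J : Ideal A)
    [IsAdicComplete K B] [IsAdicComplete J A] (φ : B →+* A) (hKJ : K ≤ J.comap φ)
    (hsurj : ∀ n : ℕ, ∀ a : A, ∃ b : B, φ b - a ∈ J ^ (n + 1))
    (hflat : letI := φ.toAlgebra; Module.Flat B A) :
    ∃ ψ : AdicCompletion (RingHom.ker ((Ideal.Quotient.mk J).comp φ)) B ≃+* A,
      ∀ b : B,
        ψ (algebraMap B (AdicCompletion (RingHom.ker ((Ideal.Quotient.mk J).comp φ)) B) b)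
          = φ b :=
  adicCompletion_iso_of_flat_pseudoClosed_general B A J φ hsurj hflat
end
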